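/- Let $a>0$, $a\neq1$, $0<c<1$, $0<\beta<1$, with the quartic $q$ having exactly two real roots and $\lambda_1<\lambda_2$ as above. For $z\in(\lambda_1,\lambda_2)$, write the roots of the cubic as $\xi_R(z)\in\mathbb{R}$ and $\xi_I(z),\overline{\xi_I(z)}\notin\mathbb{R}$. Then $\frac{d}{dz}\left(\mathrm{Re}(\xi_I(z))-\xi_R(z)\right)>0$ for all $z\in(\lambda_1,\lambda_2)$. -/

import Mathlib

open Complex

/-- The quartic numerator of `z'(ξ)`. -/
noncomputable def quartic (a c β x : ℝ) : ℝ :=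
  a^2*(1-c)*x^4 + 2*(a^2*(1-c*β) + a*(1-c*(1-β)))*x^3
    + (1-c*(1-β)+a^2*(1-c*β)+4*a)*x^2 + 2*(1+a)*x + 1

/-- The map `z(ξ)`. -/
noncomputable def zmap (a c β ξ : ℝ) : ℝ :=
  -1/ξ + c*(1-β)/(1+ξ) + c*a*β/(1+a*ξ)

/-- The cubic in `ξ` with parameter `z`, over `ℂ`. -/
noncomputable def cubicC (a c β : ℝ) (z ξ : ℂ) : ℂ :=
  z*(a:ℂ)*ξ^3 + (((1+a : ℝ):ℂ)*z + ((a*(1-c) : ℝ):ℂ))*ξ^2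
    + (z + ((1 - c*(1-β) + a*(1-c*β) : ℝ):ℂ))*ξ + 1

open Filter Topology Set

/-!
By Vieta, `2 Re ξ_I + ξ_R = -(1 + a)/a - (1 - c)/z`, so `Re ξ_I - ξ_R` has derivative
`((1 - c)/z² - 3 ξ_R'(z))/2`, and it suffices that `ξ_R' < 0`. The real root `m = ξ_R(z)` avoids
the poles `0, -1, -1/a` of `z(ξ)` and satisfies `z(m) = z`, so `ξ_R' = 1/z'(m)`, which has the sign
of `quartic m`. The quartic is positive off `[γ₁, γ₂]` and negative at `-1` and `-1/a`, hence
negative exactly on `(γ₁, γ₂)`. If `m` lay outside, `z(ξ)` would be increasing on `(-∞, γ₁]` (from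
the limit `0`) and on `[γ₂, 0)`, and negative on `(0, ∞)`, which would put `z` outside
`(z(γ₁), z(γ₂))`.
-/

theorem IsPreconnected.pos_of_forall_ne_zero {X : Type*} [TopologicalSpace X] {s : Set X}
    {f : X → ℝ} (hs : IsPreconnected s) (hf : ContinuousOn f s) (hne : ∀ x ∈ s, f x ≠ 0)
    {x₀ x : X} (hx₀ : x₀ ∈ s) (hpos : 0 < f x₀) (hx : x ∈ s) : 0 < f x := by
  by_contra! hle
  obtain ⟨y, hy, hy0⟩ := hs.intermediate_value hx hx₀ hf ⟨hle, hpos.le⟩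
  exact hne y hy hy0

theorem IsPreconnected.neg_of_forall_ne_zero {X : Type*} [TopologicalSpace X] {s : Set X}
    {f : X → ℝ} (hs : IsPreconnected s) (hf : ContinuousOn f s) (hne : ∀ x ∈ s, f x ≠ 0)
    {x₀ x : X} (hx₀ : x₀ ∈ s) (hneg : f x₀ < 0) (hx : x ∈ s) : f x < 0 :=
  neg_pos.1 <| hs.pos_of_forall_ne_zero (f := fun x ↦ -f x) hf.neg
    (fun x hx ↦ neg_ne_zero.2 (hne x hx)) hx₀ (neg_pos.2 hneg) hx

theorem StrictMonoOn.lt_of_tendsto_atBot {f : ℝ → ℝ} {x l : ℝ} (hf : StrictMonoOn f (Iic x))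
    (hl : Tendsto f atBot (𝓝 l)) : l < f x := by
  have hle : l ≤ f (x - 1) := le_of_tendsto hl <| (eventually_le_atBot (x - 1)).mono
    fun y hy ↦ hf.monotoneOn (show y ≤ x by linarith) (show x - 1 ≤ x by linarith) hy
  exact hle.trans_lt <| hf (show x - 1 ≤ x by linarith) (mem_Iic.2 le_rfl) (by linarith)

variable {a c β : ℝ}

theorem continuous_quartic : Continuous (quartic a c β) := by
  unfold quartic; fun_prop

theorem quartic_neg_one : quartic a c β (-1) = -(c * (1 - β) * (1 - a) ^ 2) := by
  unfold quartic; ring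

theorem quartic_neg_inv (ha : a ≠ 0) : quartic a c β (-a⁻¹) = -(c * β * (1 - a⁻¹) ^ 2) := by
  unfold quartic; field_simp; ring

theorem quartic_neg_one_neg (ha1 : a ≠ 1) (hc0 : 0 < c) (hβ1 : β < 1) :
    quartic a c β (-1) < 0 := by
  rw [quartic_neg_one, neg_neg_iff_pos]
  have : (1 - a) ^ 2 > 0 := by positivity [sub_ne_zero.2 ha1.symm]
  positivity

theorem quartic_neg_inv_neg (ha : a ≠ 0) (ha1 : a ≠ 1) (hc0 : 0 < c) (hβ0 : 0 < β) :
    quartic a c β (-a⁻¹) < 0 := by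
  rw [quartic_neg_inv ha, neg_neg_iff_pos]
  have : 1 - a⁻¹ ≠ 0 := sub_ne_zero.2 (by simpa [eq_comm] using ha1)
  positivity

theorem quartic_pos_of_nonneg (ha : 0 ≤ a) (hc1 : c < 1) (hβ0 : 0 < β) (hβ1 : β < 1) {x : ℝ}
    (hx : 0 ≤ x) : 0 < quartic a c β x := by
  have h1 : c * β < 1 := by nlinarith [mul_pos (sub_pos.2 hc1) hβ0]
  have h2 : c * (1 - β) < 1 := by nlinarith [mul_pos (sub_pos.2 hc1) (sub_pos.2 hβ1)]
  unfold quartic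
  have : 0 ≤ a ^ 2 * (1 - c) := by nlinarith
  have : 0 ≤ 2 * (a ^ 2 * (1 - c * β) + a * (1 - c * (1 - β))) := by nlinarith
  have : 0 ≤ 1 - c * (1 - β) + a ^ 2 * (1 - c * β) + 4 * a := by nlinarith
  positivity

theorem eventually_quartic_pos_atBot (ha : 0 < a) (hc1 : c < 1) (hβ0 : 0 < β) (hβ1 : β < 1) :
    ∀ᶠ x in atBot, 0 < quartic a c β x := by
  set A := a ^ 2 * (1 - c)
  set B := 2 * (a ^ 2 * (1 - c * β) + a * (1 - c * (1 - β)))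
  set C := 1 - c * (1 - β) + a ^ 2 * (1 - c * β) + 4 * a
  have hA : 0 < A := by positivity [sub_pos.2 hc1]
  have hC : 0 < C := by
    nlinarith [mul_pos (sub_pos.2 hc1) hβ0, mul_pos (sub_pos.2 hc1) (sub_pos.2 hβ1)]
  filter_upwards [eventually_lt_atBot (min (-B / A) (-(2 * (1 + a)) / C)), eventually_lt_atBot 0]
    with x hx hx0
  have hx1 : A * x + B < 0 := by
    have := (lt_div_iff₀ hA).1 (hx.trans_le (min_le_left _ _)); linarith
  have hx2 : C * x + 2 * (1 + a) < 0 := by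
    have := (lt_div_iff₀ hC).1 (hx.trans_le (min_le_right _ _)); linarith
  have e : quartic a c β x = x ^ 3 * (A * x + B) + x * (C * x + 2 * (1 + a)) + 1 := by
    unfold quartic; ring
  rw [e]
  have : 0 < x ^ 3 * (A * x + B) := mul_pos_of_neg_of_neg (Odd.pow_neg (by decide) hx0) hx1
  nlinarith [mul_pos_of_neg_of_neg hx0 hx2]

theorem hasStrictDerivAt_zmap {x : ℝ} (hx : x ≠ 0) (h1 : 1 + x ≠ 0) (ha : 1 + a * x ≠ 0) :
    HasStrictDerivAt (zmap a c β) (quartic a c β x / (x * (1 + x) * (1 + a * x)) ^ 2) x := by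
  have d1 : HasStrictDerivAt (fun ξ : ℝ ↦ -1 / ξ) ((0 * x - (-1) * 1) / x ^ 2) x :=
    (hasStrictDerivAt_const x (-1)).div (hasStrictDerivAt_id x) hx
  have d2 : HasStrictDerivAt (fun ξ : ℝ ↦ c * (1 - β) / (1 + ξ))
      ((0 * (1 + x) - c * (1 - β) * 1) / (1 + x) ^ 2) x :=
    (hasStrictDerivAt_const x _).div ((hasStrictDerivAt_id x).const_add 1) h1
  have d3 : HasStrictDerivAt (fun ξ : ℝ ↦ c * a * β / (1 + a * ξ))
      ((0 * (1 + a * x) - c * a * β * (a * 1)) / (1 + a * x) ^ 2) x :=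
    (hasStrictDerivAt_const x _).div (((hasStrictDerivAt_id x).const_mul a).const_add 1) ha
  refine ((d1.add d2).add d3).congr_deriv ?_
  -- the form in which `field_simp` looks for this denominator
  have ha' : 1 + x * a ≠ 0 := by rwa [mul_comm]
  unfold quartic
  field_simp
  ring

theorem strictMonoOn_zmap {s : Set ℝ} (hs : Convex ℝ s)
    (hpoles : ∀ y ∈ s, y ≠ 0 ∧ 1 + y ≠ 0 ∧ 1 + a * y ≠ 0)
    (hpos : ∀ y ∈ interior s, 0 < quartic a c β y) : StrictMonoOn (zmap a c β) s := by
  refine strictMonoOn_of_deriv_pos hs (fun y hy ↦ ?_) fun y hy ↦ ?_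
  · obtain ⟨h0, h1, ha⟩ := hpoles y hy
    exact (hasStrictDerivAt_zmap h0 h1 ha).hasDerivAt.continuousAt.continuousWithinAt
  · obtain ⟨h0, h1, ha⟩ := hpoles y (interior_subset hy)
    rw [(hasStrictDerivAt_zmap h0 h1 ha).hasDerivAt.deriv]
    exact div_pos (hpos y hy) (sq_pos_of_ne_zero (mul_ne_zero (mul_ne_zero h0 h1) ha))

theorem tendsto_zmap_atBot (ha : 0 < a) : Tendsto (zmap a c β) atBot (𝓝 0) := by
  have h1 : Tendsto (fun ξ : ℝ ↦ 1 + ξ) atBot atBot := tendsto_atBot_add_const_left _ _ tendsto_id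
  have ha' : Tendsto (fun ξ : ℝ ↦ 1 + a * ξ) atBot atBot :=
    tendsto_atBot_add_const_left _ _ (tendsto_id.const_mul_atBot ha)
  unfold zmap
  simpa using ((tendsto_const_nhds (x := (-1 : ℝ))).div_atBot tendsto_id).add
    ((tendsto_const_nhds (x := c * (1 - β))).div_atBot h1) |>.add
    ((tendsto_const_nhds (x := c * a * β)).div_atBot ha')

theorem zmap_neg_of_pos (ha : 0 < a) (hc0 : 0 < c) (hc1 : c < 1) (hβ0 : 0 < β) (hβ1 : β < 1)
    {x : ℝ} (hx : 0 < x) : zmap a c β x < 0 := by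
  have h1 : c * (1 - β) / (1 + x) ≤ c * (1 - β) / x :=
    div_le_div_of_nonneg_left (by nlinarith) hx (by linarith)
  have h2 : c * a * β / (1 + a * x) < c * β / x := by
    rw [div_lt_div_iff₀ (by positivity) hx]; nlinarith [mul_pos (mul_pos hc0 ha) hβ0]
  have h3 : -1 / x + c * (1 - β) / x + c * β / x < 0 := by
    rw [← add_div, ← add_div]; exact div_neg_of_neg_of_pos (by linarith) hx
  unfold zmap; linarith

section roots

variable {γ₁ γ₂ : ℝ}

theorem quartic_ne_zero (hroots : {x | quartic a c β x = 0} = {γ₁, γ₂}) {x : ℝ} (h₁ : x ≠ γ₁)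
    (h₂ : x ≠ γ₂) : quartic a c β x ≠ 0 :=
  fun h ↦ (hroots.subset h).elim h₁ h₂

theorem quartic_pos_of_lt (ha : 0 < a) (hc1 : c < 1) (hβ0 : 0 < β) (hβ1 : β < 1)
    (hroots : {x | quartic a c β x = 0} = {γ₁, γ₂}) (hlt : γ₁ < γ₂) {x : ℝ} (hx : x < γ₁) :
    0 < quartic a c β x := by
  have hne : ∀ y ∈ Iio γ₁, quartic a c β y ≠ 0 := fun y hy ↦
    quartic_ne_zero hroots hy.ne (hy.trans hlt).ne
  obtain ⟨x₀, hx₀, hx₀γ⟩ :=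
    ((eventually_quartic_pos_atBot ha hc1 hβ0 hβ1).and (eventually_lt_atBot γ₁)).exists
  exact isPreconnected_Iio.pos_of_forall_ne_zero continuous_quartic.continuousOn hne hx₀γ hx₀ hx

theorem quartic_pos_of_gt (ha : 0 < a) (hc1 : c < 1) (hβ0 : 0 < β) (hβ1 : β < 1)
    (hroots : {x | quartic a c β x = 0} = {γ₁, γ₂}) (hlt : γ₁ < γ₂) {x : ℝ} (hx : γ₂ < x) :
    0 < quartic a c β x := by
  have hne : ∀ y ∈ Ioi γ₂, quartic a c β y ≠ 0 := fun y hy ↦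
    quartic_ne_zero hroots (hlt.trans hy).ne' hy.ne'
  exact isPreconnected_Ioi.pos_of_forall_ne_zero continuous_quartic.continuousOn hne
    (hx.trans_le (le_max_left x 0)) (quartic_pos_of_nonneg ha.le hc1 hβ0 hβ1 (le_max_right x 0)) hx

theorem quartic_neg_iff (ha : 0 < a) (ha1 : a ≠ 1) (hc0 : 0 < c) (hc1 : c < 1) (hβ0 : 0 < β)
    (hβ1 : β < 1) (hroots : {x | quartic a c β x = 0} = {γ₁, γ₂}) (hlt : γ₁ < γ₂) {x : ℝ} :
    quartic a c β x < 0 ↔ x ∈ Ioo γ₁ γ₂ := by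
  have mem_of_neg : ∀ y, quartic a c β y < 0 → y ∈ Ioo γ₁ γ₂ := fun y hy ↦ by
    have h₁ : γ₁ ∈ {x | quartic a c β x = 0} := hroots ▸ mem_insert γ₁ {γ₂}
    have h₂ : γ₂ ∈ {x | quartic a c β x = 0} := hroots ▸ mem_insert_of_mem γ₁ rfl
    by_contra hmem
    rcases not_and_or.1 hmem with h | h <;> rcases (not_lt.1 h).lt_or_eq with h' | rfl
    · linarith [quartic_pos_of_lt ha hc1 hβ0 hβ1 hroots hlt h']
    · linarith [h₁.out]
    · linarith [quartic_pos_of_gt ha hc1 hβ0 hβ1 hroots hlt h']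
    · linarith [h₂.out]
  refine ⟨mem_of_neg x, fun hx ↦ ?_⟩
  have hne : ∀ y ∈ Ioo γ₁ γ₂, quartic a c β y ≠ 0 := fun y hy ↦
    quartic_ne_zero hroots hy.1.ne' hy.2.ne
  have hneg := quartic_neg_one_neg ha1 hc0 hβ1
  exact isPreconnected_Ioo.neg_of_forall_ne_zero continuous_quartic.continuousOn hne
    (mem_of_neg _ hneg) hneg hx

theorem zmap_poles_mem_Ioo (ha : 0 < a) (ha1 : a ≠ 1) (hc0 : 0 < c) (hc1 : c < 1) (hβ0 : 0 < β)
    (hβ1 : β < 1) (hroots : {x | quartic a c β x = 0} = {γ₁, γ₂}) (hlt : γ₁ < γ₂) :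
    -1 ∈ Ioo γ₁ γ₂ ∧ -a⁻¹ ∈ Ioo γ₁ γ₂ :=
  ⟨(quartic_neg_iff ha ha1 hc0 hc1 hβ0 hβ1 hroots hlt).1 (quartic_neg_one_neg ha1 hc0 hβ1),
    (quartic_neg_iff ha ha1 hc0 hc1 hβ0 hβ1 hroots hlt).1
      (quartic_neg_inv_neg ha.ne' ha1 hc0 hβ0)⟩

theorem strictMonoOn_zmap_Iic (ha : 0 < a) (ha1 : a ≠ 1) (hc0 : 0 < c) (hc1 : c < 1)
    (hβ0 : 0 < β) (hβ1 : β < 1) (hroots : {x | quartic a c β x = 0} = {γ₁, γ₂})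
    (hlt : γ₁ < γ₂) : StrictMonoOn (zmap a c β) (Iic γ₁) := by
  obtain ⟨h₁, hₐ⟩ := zmap_poles_mem_Ioo ha ha1 hc0 hc1 hβ0 hβ1 hroots hlt
  refine strictMonoOn_zmap (convex_Iic γ₁) (fun y (hy : y ≤ γ₁) ↦ ?_) fun y hy ↦ ?_
  · have : y < -a⁻¹ := hy.trans_lt hₐ.1
    exact ⟨by linarith [h₁.1], by linarith [h₁.1], by nlinarith [mul_inv_cancel₀ ha.ne']⟩
  · rw [interior_Iic] at hy
    exact quartic_pos_of_lt ha hc1 hβ0 hβ1 hroots hlt hy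

theorem strictMonoOn_zmap_Ico (ha : 0 < a) (ha1 : a ≠ 1) (hc0 : 0 < c) (hc1 : c < 1)
    (hβ0 : 0 < β) (hβ1 : β < 1) (hroots : {x | quartic a c β x = 0} = {γ₁, γ₂})
    (hlt : γ₁ < γ₂) : StrictMonoOn (zmap a c β) (Ico γ₂ 0) := by
  obtain ⟨h₁, hₐ⟩ := zmap_poles_mem_Ioo ha ha1 hc0 hc1 hβ0 hβ1 hroots hlt
  refine strictMonoOn_zmap (convex_Ico γ₂ 0) (fun y hy ↦ ?_) fun y hy ↦ ?_
  · have : -a⁻¹ < y := hₐ.2.trans_le hy.1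
    exact ⟨hy.2.ne, by linarith [h₁.2, hy.1], by nlinarith [mul_inv_cancel₀ ha.ne']⟩
  · rw [interior_Ico] at hy
    exact quartic_pos_of_gt ha hc1 hβ0 hβ1 hroots hlt hy.1

theorem quartic_neg_of_zmap_mem (ha : 0 < a) (ha1 : a ≠ 1) (hc0 : 0 < c) (hc1 : c < 1)
    (hβ0 : 0 < β) (hβ1 : β < 1) (hroots : {x | quartic a c β x = 0} = {γ₁, γ₂})
    (hlt : γ₁ < γ₂) {m : ℝ} (hm0 : m ≠ 0)
    (hm : zmap a c β m ∈ Ioo (zmap a c β γ₁) (zmap a c β γ₂)) : quartic a c β m < 0 := by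
  have hIic := strictMonoOn_zmap_Iic ha ha1 hc0 hc1 hβ0 hβ1 hroots hlt
  rw [quartic_neg_iff ha ha1 hc0 hc1 hβ0 hβ1 hroots hlt]
  refine ⟨lt_of_not_ge fun h ↦ hm.1.not_ge (hIic.monotoneOn h (mem_Iic.2 le_rfl) h),
    lt_of_not_ge fun h ↦ ?_⟩
  rcases hm0.lt_or_gt with hneg | hpos
  · exact hm.2.not_ge <| (strictMonoOn_zmap_Ico ha ha1 hc0 hc1 hβ0 hβ1 hroots hlt).monotoneOn
      ⟨le_rfl, h.trans_lt hneg⟩ ⟨h, hneg⟩ h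
  · linarith [hm.1, zmap_neg_of_pos ha hc0 hc1 hβ0 hβ1 hpos,
      hIic.lt_of_tendsto_atBot (tendsto_zmap_atBot (c := c) (β := β) ha)]

end roots

theorem cubicC_ofReal_eq_zero_iff {z x : ℝ} (hx : x ≠ 0) (h1 : 1 + x ≠ 0) (ha : 1 + a * x ≠ 0) :
    cubicC a c β z x = 0 ↔ zmap a c β x = z := by
  have hfac : cubicC a c β z x = (((z - zmap a c β x) * (x * (1 + x) * (1 + a * x)) : ℝ) : ℂ) := by
    have ha' : 1 + x * a ≠ 0 := by rwa [mul_comm]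
    have hreal : (z - zmap a c β x) * (x * (1 + x) * (1 + a * x)) = z * a * x ^ 3
        + ((1 + a) * z + a * (1 - c)) * x ^ 2
        + (z + (1 - c * (1 - β) + a * (1 - c * β))) * x + 1 := by
      unfold zmap; field_simp; ring
    rw [hreal]; unfold cubicC; push_cast; ring
  rw [hfac, ofReal_eq_zero, mul_eq_zero, sub_eq_zero, eq_comm]
  simp [hx, h1, ha]

theorem ne_zmap_poles_of_cubicC_eq_zero (ha : a ≠ 0) (ha1 : a ≠ 1) (hc0 : c ≠ 0) (hβ0 : β ≠ 0)
    (hβ1 : β ≠ 1) {z : ℂ} {x : ℝ} (h : cubicC a c β z x = 0) :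
    x ≠ 0 ∧ 1 + x ≠ 0 ∧ 1 + a * x ≠ 0 := by
  refine ⟨?_, fun hx ↦ ?_, fun hx ↦ ?_⟩
  · rintro rfl
    simp [cubicC] at h
  · obtain rfl : x = -1 := by linarith
    have : cubicC a c β z (-1 : ℝ) = ((c * (1 - β) * (1 - a) : ℝ) : ℂ) := by
      unfold cubicC; push_cast; ring
    rw [this, ofReal_eq_zero] at h
    exact mul_ne_zero (mul_ne_zero hc0 (sub_ne_zero.2 hβ1.symm)) (sub_ne_zero.2 ha1.symm) h
  · obtain rfl : x = -a⁻¹ := by field_simp; linarith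
    have : cubicC a c β z (-a⁻¹ : ℝ) = ((c * β * (a - 1) / a : ℝ) : ℂ) := by
      have : (a : ℂ) ≠ 0 := ofReal_ne_zero.2 ha
      unfold cubicC; push_cast; field_simp; ring
    rw [this, ofReal_eq_zero] at h
    exact div_ne_zero (mul_ne_zero (mul_ne_zero hc0 hβ0) (sub_ne_zero.2 ha1)) ha h

variable {z r : ℝ} {w : ℂ}

theorem ne_zero_of_cubicC_eq_mul
    (hfact : ∀ ξ : ℂ, cubicC a c β z ξ = z * a * (ξ - r) * (ξ - w) * (ξ - starRingEnd ℂ w)) :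
    z ≠ 0 := by
  rintro rfl
  simpa [cubicC] using hfact 0

theorem eq_of_cubicC_eq_zero (ha : a ≠ 0)
    (hfact : ∀ ξ : ℂ, cubicC a c β z ξ = z * a * (ξ - r) * (ξ - w) * (ξ - starRingEnd ℂ w))
    (hw : w.im ≠ 0) {x : ℝ} (hx : cubicC a c β z x = 0) : x = r := by
  have hz : (z : ℂ) ≠ 0 := ofReal_ne_zero.2 (ne_zero_of_cubicC_eq_mul hfact)
  have h₁ : (x : ℂ) - w ≠ 0 := fun h ↦ hw (by simpa using congrArg im h)
  have h₂ : (x : ℂ) - starRingEnd ℂ w ≠ 0 := fun h ↦ hw (by simpa using congrArg im h)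
  rw [hfact] at hx
  simpa [hz, ha, h₁, h₂, sub_eq_zero] using hx

theorem re_sub_eq_of_cubicC_eq_mul (ha : a ≠ 0)
    (hfact : ∀ ξ : ℂ, cubicC a c β z ξ = z * a * (ξ - r) * (ξ - w) * (ξ - starRingEnd ℂ w)) :
    w.re - r = -((1 + a) / a + (1 - c) / z + 3 * r) / 2 := by
  have hz := ne_zero_of_cubicC_eq_mul hfact
  have h₁ := hfact 1
  have h₂ := hfact (-1)
  have h₀ := hfact 0
  unfold cubicC at h₁ h₂ h₀
  -- comparing the coefficients of `ξ²` (Vieta)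
  have hvieta : ((z * a * (r + 2 * w.re) + ((1 + a) * z + a * (1 - c)) : ℝ) : ℂ) = 0 := by
    have hre : w + starRingEnd ℂ w = 2 * w.re := by rw [add_conj]; push_cast; ring
    push_cast at h₁ h₂ h₀ ⊢
    linear_combination (h₁ + h₂) / 2 - h₀ - z * a * hre
  rw [ofReal_eq_zero] at hvieta
  field_simp
  linear_combination hvieta

theorem hasDerivAt_vieta_expr {g : ℝ → ℝ} {g' : ℝ} (hz : z ≠ 0) (hg : HasDerivAt g g' z) :
    HasDerivAt (fun t ↦ -((1 + a) / a + (1 - c) / t + 3 * g t) / 2)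
      (((1 - c) / z ^ 2 - 3 * g') / 2) z := by
  refine ((((hasDerivAt_const z ((1 + a) / a)).add
    ((hasDerivAt_const z (1 - c)).div (hasDerivAt_id' z) hz)).add
    (hg.const_mul 3)).neg.div_const 2).congr_deriv ?_
  ring

theorem hasStrictDerivAt_of_cubicC_root {g : ℝ → ℝ} {s : Set ℝ} (hs : IsOpen s)
    (hroot : ∀ t ∈ s, ∀ x : ℝ, cubicC a c β t x = 0 → x = g t) {m : ℝ} (hm0 : m ≠ 0)
    (hm1 : 1 + m ≠ 0) (hma : 1 + a * m ≠ 0) (hms : zmap a c β m ∈ s)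
    (hq : quartic a c β m ≠ 0) :
    HasStrictDerivAt g (quartic a c β m / (m * (1 + m) * (1 + a * m)) ^ 2)⁻¹ (zmap a c β m) := by
  have hD := hasStrictDerivAt_zmap (c := c) (β := β) hm0 hm1 hma
  refine hD.to_local_left_inverse (div_ne_zero hq (by simp [hm0, hm1, hma])) ?_
  have e₁ : ∀ᶠ x in 𝓝 m, 1 + x ≠ 0 :=
    (continuous_const.add continuous_id).continuousAt.eventually_ne hm1
  have eₐ : ∀ᶠ x in 𝓝 m, 1 + a * x ≠ 0 :=
    (continuous_const.add (continuous_const.mul continuous_id)).continuousAt.eventually_ne hma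
  have eₛ : ∀ᶠ x in 𝓝 m, zmap a c β x ∈ s :=
    hD.hasDerivAt.continuousAt.preimage_mem_nhds (hs.mem_nhds hms)
  filter_upwards [eventually_ne_nhds hm0, e₁, eₐ, eₛ] with x hx0 hx1 hxa hxs
  exact (hroot _ hxs x ((cubicC_ofReal_eq_zero_iff hx0 hx1 hxa).2 rfl)).symm

theorem deriv_re_xiI_sub_xiR_pos_general
    (a c β : ℝ) (ha : 0 < a) (ha1 : a ≠ 1) (hc0 : 0 < c) (hc1 : c < 1)
    (hβ0 : 0 < β) (hβ1 : β < 1)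
    (γ1 γ2 : ℝ) (hlt : γ1 < γ2)
    (hq1 : quartic a c β γ1 = 0) (hq2 : quartic a c β γ2 = 0)
    (honly : ∀ x : ℝ, quartic a c β x = 0 → x = γ1 ∨ x = γ2)
    (ξR : ℝ → ℝ) (ξI : ℝ → ℂ)
    (hfact : ∀ z ∈ Set.Ioo (zmap a c β γ1) (zmap a c β γ2), ∀ ξ : ℂ,
      cubicC a c β (z:ℂ) ξ
        = (z:ℂ)*(a:ℂ)*(ξ - ((ξR z : ℝ):ℂ))*(ξ - ξI z)*(ξ - starRingEnd ℂ (ξI z)))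
    (him : ∀ z ∈ Set.Ioo (zmap a c β γ1) (zmap a c β γ2), (ξI z).im ≠ 0) :
    ∀ z ∈ Set.Ioo (zmap a c β γ1) (zmap a c β γ2),
      0 < deriv (fun t => (ξI t).re - ξR t) z := by
  have hroots : {x | quartic a c β x = 0} = {γ1, γ2} :=
    Set.ext fun x ↦ ⟨honly x, by rintro (rfl | rfl) <;> assumption⟩
  intro z hz
  have hm : cubicC a c β z (ξR z) = 0 := by rw [hfact z hz]; ring
  obtain ⟨hm0, hm1, hma⟩ := ne_zmap_poles_of_cubicC_eq_zero ha.ne' ha1 hc0.ne' hβ0.ne' hβ1.ne hm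
  have hzm : zmap a c β (ξR z) = z := (cubicC_ofReal_eq_zero_iff hm0 hm1 hma).1 hm
  have hq := quartic_neg_of_zmap_mem ha ha1 hc0 hc1 hβ0 hβ1 hroots hlt hm0 (by rwa [hzm])
  have hξR := hasStrictDerivAt_of_cubicC_root isOpen_Ioo
    (fun t ht _ ↦ eq_of_cubicC_eq_zero ha.ne' (hfact t ht) (him t ht)) hm0 hm1 hma
    (by rwa [hzm]) hq.ne
  rw [hzm] at hξR
  have heq : (fun t ↦ (ξI t).re - ξR t) =ᶠ[𝓝 z]
      fun t ↦ -((1 + a) / a + (1 - c) / t + 3 * ξR t) / 2 :=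
    eventually_of_mem (isOpen_Ioo.mem_nhds hz) fun t ht ↦
      re_sub_eq_of_cubicC_eq_mul ha.ne' (hfact t ht)
  have hD : quartic a c β (ξR z) / (ξR z * (1 + ξR z) * (1 + a * ξR z)) ^ 2 < 0 :=
    div_neg_of_neg_of_pos hq (by positivity)
  have hz0 := ne_zero_of_cubicC_eq_mul (hfact z hz)
  rw [heq.deriv_eq, (hasDerivAt_vieta_expr hz0 hξR.hasDerivAt).deriv]
  have : 0 < (1 - c) / z ^ 2 := div_pos (by linarith) (by positivity)
  linarith [inv_lt_zero.2 hD]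

theorem deriv_re_xiI_sub_xiR_pos
    (a c β : ℝ) (ha : 0 < a) (ha1 : a ≠ 1) (hc0 : 0 < c) (hc1 : c < 1)
    (hβ0 : 0 < β) (hβ1 : β < 1)
    (γ1 γ2 : ℝ) (hlt : γ1 < γ2)
    (hq1 : quartic a c β γ1 = 0) (hq2 : quartic a c β γ2 = 0)
    (honly : ∀ x : ℝ, quartic a c β x = 0 → x = γ1 ∨ x = γ2)
    (hlam : zmap a c β γ1 < zmap a c β γ2)
    (ξR : ℝ → ℝ) (ξI : ℝ → ℂ)
    (hfact : ∀ z ∈ Set.Ioo (zmap a c β γ1) (zmap a c β γ2), ∀ ξ : ℂ,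
      cubicC a c β (z:ℂ) ξ
        = (z:ℂ)*(a:ℂ)*(ξ - ((ξR z : ℝ):ℂ))*(ξ - ξI z)*(ξ - starRingEnd ℂ (ξI z)))
    (him : ∀ z ∈ Set.Ioo (zmap a c β γ1) (zmap a c β γ2), (ξI z).im ≠ 0) :
    ∀ z ∈ Set.Ioo (zmap a c β γ1) (zmap a c β γ2),
      0 < deriv (fun t => (ξI t).re - ξR t) z :=
  deriv_re_xiI_sub_xiR_pos_general a c β ha ha1 hc0 hc1 hβ0 hβ1 γ1 γ2 hlt hq1 hq2 honly ξR ξI hfact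
    him
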